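/- Consider the set of real symmetric 4×4 positive semidefinite matrices X satisfying X₁₁ + 2X₂₃ = 1, X₂₂ = 0, and X₃₃ + 2(X₁₃ + X₁₄) = 0. Then every such X satisfies X₂₃ = 0 and X₁₁ = 1, so the infimum of X₁₁ over this set is 1. -/

import Mathlib

/-!
A positive semidefinite matrix with a zero diagonal entry has zero row and column there:
the quadratic form on `t • eᵢ + eⱼ` is linear in `t`, so it can only stay nonnegative if
its slope `2 Xᵢⱼ` vanishes. Thus `X₂₂ = 0` forces `X₂₃ = 0`, and then `X₁₁ = 1`; the
value `1` is attained by `diag(1, 0, 0, 0)`.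
-/

variable {R : Type*} [Field R] [LinearOrder R] [IsStrictOrderedRing R]

lemma eq_zero_of_forall_nonneg_mul_add {a c : R} (h : ∀ t : R, 0 ≤ t * a + c) : a = 0 := by
  by_contra ha
  have := h (-(c + 1) / a)
  rw [div_mul_cancel₀ _ ha] at this
  linarith

namespace Matrix.PosSemidef

variable [StarRing R] [TrivialStar R] {n : Type*} [Fintype n] [DecidableEq n]

lemma apply_eq_zero_of_diag_eq_zero {A : Matrix n n R} (hA : A.PosSemidef) {i : n}
    (hi : A i i = 0) (j : n) : A i j = 0 := by
  obtain rfl | hij := eq_or_ne i j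
  · exact hi
  have hsymm : A j i = A i j := by simpa using hA.1.apply i j
  refine eq_zero_of_forall_nonneg_mul_add (c := A j j) fun t => ?_
  have := hA.dotProduct_mulVec_nonneg (Pi.single i (t / 2) + Pi.single j 1)
  simp [mulVec_add, mulVec_single, dotProduct_add, add_dotProduct, hi, hsymm] at this
  linarith

end Matrix.PosSemidef

/-- Primal of the singularity-degree-two counter-example: feasibility forces
`X 1 2 = 0` and `X 0 0 = 1`, hence the infimum of `X 0 0` is `1`. -/
theorem counterexample_primal :
    (∀ X : Matrix (Fin 4) (Fin 4) ℝ, X.PosSemidef →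
      X 0 0 + 2 * X 1 2 = 1 → X 1 1 = 0 → X 2 2 + 2 * (X 0 2 + X 0 3) = 0 →
      X 1 2 = 0 ∧ X 0 0 = 1) ∧
    IsLeast {v : ℝ | ∃ X : Matrix (Fin 4) (Fin 4) ℝ, X.PosSemidef ∧
      X 0 0 + 2 * X 1 2 = 1 ∧ X 1 1 = 0 ∧ X 2 2 + 2 * (X 0 2 + X 0 3) = 0 ∧
      v = X 0 0} 1 := by
  have feasible : ∀ X : Matrix (Fin 4) (Fin 4) ℝ, X.PosSemidef →
      X 0 0 + 2 * X 1 2 = 1 → X 1 1 = 0 → X 2 2 + 2 * (X 0 2 + X 0 3) = 0 →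
      X 1 2 = 0 ∧ X 0 0 = 1 := by
    intro X hX h_obj h_diag _
    have h12 : X 1 2 = 0 := hX.apply_eq_zero_of_diag_eq_zero h_diag 2
    exact ⟨h12, by linarith⟩
  refine ⟨feasible, ⟨Matrix.diagonal ![1, 0, 0, 0], ?_, ?_⟩, ?_⟩
  · rw [Matrix.posSemidef_diagonal_iff]
    intro i
    fin_cases i <;> norm_num
  · simp [Matrix.diagonal]
  · rintro v ⟨X, hX, h_obj, h_diag, h_lin, rfl⟩
    exact (feasible X hX h_obj h_diag h_lin).2.ge
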